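/- Let d, n ≥ 1, M ≥ 0, let each f_i : ℝ^d → ℝ be convex and M-Lipschitz, let r > 0, χ ≥ 1, and let K, T ≥ 1 be integers. Set r_x = 2r/3 and r_yz = 3/r (so r_x + 1/r_yz = r). Let x* be the unique minimizer of p. Suppose x_a = (x_{a,1},…,x_{a,n}), y_a ∈ (ℝ^d)^n and z_a ∈ L⊥ satisfy, for all x, y ∈ (ℝ^d)^n and all z ∈ L⊥: Q(x_a, y, z) − Q(x, y_a, z_a) ≤ (2/K²)·(r‖x‖² + (18/r)‖y‖² + (45χ²/r)‖z‖²) + 72nM²/(rKT). Then x_o = (1/n)∑_{i=1}^n x_{a,i} satisfies p(x_o) − p(x*) ≤ 212χ²M²/(rK²) + 72M²/(rKT) + (12/K²)·(1386χ²M²/(rK²) + 72M²/(rKT)). -/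

import Mathlib

/-!
Let `g i` be a subgradient of `f i` at `x_o` (of norm `≤ M`, by Lipschitz continuity), `ḡ` their
mean, and test the saddle-gap bound at `x = (c, …, c)`, `y = (g i - ḡ + v)ᵢ`, `z = (ḡ - g i)ᵢ`.
Then `z ∈ L⊥` and `y + z = (v, …, v)`, so the subgradient inequalities bound `Q(x_a, y, z)` from
below by `∑ f i (x_o) + n (r_x/2 ‖x_o‖² - ⟪v, x_o⟫ - r_yz/2 ‖v‖²)`, while maximising the concave
part in `y_a` bounds `Q(x, y_a, z_a)` from above by `n p(c)`, because `r_x + 1/r_yz = r`. With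
`v = -w / r_yz` the lower bound is `n (p(x_o) - ‖x_o - w‖² / (2 r_yz))`. Taking `c = x*` and
`w ∈ {x*, x_o}` gives two estimates for `p(x_o) - p(x*)`; they are combined with the quadratic
growth `r/2 ‖x_o - x*‖² ≤ p(x_o) - p(x*)` of the `r`-strongly convex `p` and with `r ‖x*‖ ≤ 2M`.
-/

open scoped BigOperators RealInnerProductSpace

noncomputable section

/-- `(ℝ^d)^n` with the Euclidean (ℓ²-product) norm. -/
abbrev Vec (d n : ℕ) := PiLp 2 (fun _ : Fin n => EuclideanSpace ℝ (Fin d))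

theorem neg_inner_sub_le {E : Type*} [NormedAddCommGroup E] [InnerProductSpace ℝ E] (u c : E)
    {a : ℝ} (ha : 0 < a) : -⟪u, c⟫ - a / 2 * ‖u‖ ^ 2 ≤ a⁻¹ / 2 * ‖c‖ ^ 2 := by
  have h : a⁻¹ / 2 * ‖a • u + c‖ ^ 2 = a / 2 * ‖u‖ ^ 2 + ⟪u, c⟫ + a⁻¹ / 2 * ‖c‖ ^ 2 := by
    rw [norm_add_sq_real, norm_smul, real_inner_smul_left, Real.norm_of_nonneg ha.le]
    field_simp
  have : 0 ≤ a⁻¹ / 2 * ‖a • u + c‖ ^ 2 := by positivity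
  linarith

open Filter Topology in
theorem StrongConvexOn.mul_sq_norm_sub_le_sub {E : Type*} [NormedAddCommGroup E]
    [NormedSpace ℝ E] {f : E → ℝ} {m : ℝ} (hf : StrongConvexOn Set.univ m f) {x₀ : E}
    (hmin : ∀ x, f x₀ ≤ f x) (x : E) : m / 2 * ‖x - x₀‖ ^ 2 ≤ f x - f x₀ := by
  have hseg : ∀ t ∈ Set.Ioo (0 : ℝ) 1, (1 - t) * (m / 2 * ‖x - x₀‖ ^ 2) ≤ f x - f x₀ := by
    rintro t ⟨ht₀, ht₁⟩
    have h := (hmin _).trans <| hf.2 (Set.mem_univ x) (Set.mem_univ x₀) ht₀.le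
      (sub_nonneg.2 ht₁.le) (add_sub_cancel t 1)
    simp only [smul_eq_mul] at h
    nlinarith
  have hlim : Tendsto (fun t : ℝ => (1 - t) * (m / 2 * ‖x - x₀‖ ^ 2)) (𝓝[>] 0)
      (𝓝 (m / 2 * ‖x - x₀‖ ^ 2)) := by
    have : Continuous fun t : ℝ => (1 - t) * (m / 2 * ‖x - x₀‖ ^ 2) := by fun_prop
    simpa using (this.tendsto 0).mono_left nhdsWithin_le_nhds
  exact le_of_tendsto hlim (eventually_of_mem (Ioo_mem_nhdsGT zero_lt_one) hseg)

section Subgradient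

variable {E : Type*} [NormedAddCommGroup E] [InnerProductSpace ℝ E] {f : E → ℝ} {M : ℝ}

theorem norm_le_of_forall_add_inner_le (hM : 0 ≤ M)
    (hlip : ∀ x x', |f x - f x'| ≤ M * ‖x - x'‖) {x₀ g : E}
    (hg : ∀ x, f x₀ + ⟪g, x - x₀⟫ ≤ f x) : ‖g‖ ≤ M := by
  have hgrow := hg (x₀ + g)
  have hlip' := hlip (x₀ + g) x₀
  simp only [add_sub_cancel_left, real_inner_self_eq_norm_sq] at hgrow hlip'
  have : ‖g‖ ^ 2 ≤ M * ‖g‖ := by linarith [le_abs_self (f (x₀ + g) - f x₀)]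
  nlinarith [norm_nonneg g]

theorem ConvexOn.exists_forall_add_inner_le [CompleteSpace E] (hconv : ConvexOn ℝ Set.univ f)
    (hcont : Continuous f) (x₀ : E) : ∃ g : E, ∀ x, f x₀ + ⟪g, x - x₀⟫ ≤ f x := by
  set S : Set (E × ℝ) := {q | q.1 ∈ Set.univ ∧ f q.1 < q.2}
  have hSopen : IsOpen S := by
    simpa [S] using isOpen_lt (hcont.comp continuous_fst) continuous_snd
  have hx₀ : (x₀, f x₀) ∉ S := by simp [S]
  obtain ⟨ℓ, hℓ⟩ := geometric_hahn_banach_open_point hconv.convex_strict_epigraph hSopen hx₀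
  set φ := ℓ.comp (ContinuousLinearMap.inl ℝ E ℝ)
  set c := ℓ (0, 1)
  have hℓ_apply : ∀ x s, ℓ (x, s) = φ x + s * c := fun x s =>
    calc ℓ (x, s) = ℓ ((x, 0) + s • (0, 1)) := by simp
      _ = φ x + s * c := by rw [map_add, map_smul, smul_eq_mul]; rfl
  have hc : c < 0 := by
    have := hℓ (x₀, f x₀ + 1) (by simp)
    rw [hℓ_apply, hℓ_apply] at this
    linarith
  have hsupp : ∀ x, φ x + f x * c ≤ φ x₀ + f x₀ * c := by
    intro x
    refine le_of_forall_pos_lt_add fun ε hε => ?_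
    have hδ : 0 < ε / -c := div_pos hε (neg_pos.2 hc)
    have := hℓ (x, f x + ε / -c) (by simpa using hδ)
    rw [hℓ_apply, hℓ_apply, add_mul, div_mul_eq_mul_div, div_neg, mul_div_cancel_right₀ _ hc.ne]
      at this
    linarith
  refine ⟨(-c)⁻¹ • (InnerProductSpace.toDual ℝ E).symm φ, fun x => ?_⟩
  rw [real_inner_smul_left, InnerProductSpace.toDual_symm_apply, map_sub]
  have : (-c)⁻¹ * (φ x - φ x₀) ≤ f x - f x₀ := by
    rw [inv_mul_le_iff₀ (neg_pos.2 hc)]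
    linarith [hsupp x]
  linarith

theorem ConvexOn.exists_subgradient_norm_le [CompleteSpace E] (hconv : ConvexOn ℝ Set.univ f)
    (hM : 0 ≤ M) (hlip : ∀ x x', |f x - f x'| ≤ M * ‖x - x'‖) (x₀ : E) :
    ∃ g : E, ‖g‖ ≤ M ∧ ∀ x, f x₀ + ⟪g, x - x₀⟫ ≤ f x := by
  have hcont : Continuous f :=
    (LipschitzWith.of_dist_le' (K := M) fun x y => by
      rw [Real.dist_eq, dist_eq_norm]; exact hlip x y).continuous
  obtain ⟨g, hg⟩ := hconv.exists_forall_add_inner_le hcont x₀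
  exact ⟨g, norm_le_of_forall_add_inner_le hM hlip hg, hg⟩

end Subgradient

section Mean

variable {ι E : Type*} [Fintype ι] [NormedAddCommGroup E] [InnerProductSpace ℝ E]

def mean (a : ι → E) : E := (Fintype.card ι : ℝ)⁻¹ • ∑ i, a i

theorem card_smul_mean (a : ι → E) : (Fintype.card ι : ℝ) • mean a = ∑ i, a i := by
  rcases isEmpty_or_nonempty ι with hι | hι
  · simp
  · rw [mean, smul_inv_smul₀ (by positivity)]

theorem sum_sub_mean (a : ι → E) : ∑ i, (a i - mean a) = 0 := by
  rw [Finset.sum_sub_distrib, Finset.sum_const, Finset.card_univ, ← Nat.cast_smul_eq_nsmul ℝ,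
    card_smul_mean, sub_self]

theorem mean_add (a b : ι → E) : mean (a + b) = mean a + mean b := by
  simp [mean, Finset.sum_add_distrib, smul_add]

theorem mean_eq_zero {a : ι → E} (ha : ∑ i, a i = 0) : mean a = 0 := by
  rw [mean, ha, smul_zero]

theorem card_mul_inner_mean_left (a : ι → E) (c : E) :
    Fintype.card ι * ⟪mean a, c⟫ = ∑ i, ⟪a i, c⟫ := by
  rw [← real_inner_smul_left, card_smul_mean, sum_inner]

theorem sum_inner_sub_mean_left (a b : ι → E) :
    ∑ i, ⟪a i - mean a, b i⟫ = ∑ i, ⟪a i, b i - mean b⟫ := by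
  have h₁ : ∑ i, ⟪a i - mean a, mean b⟫ = 0 := by
    rw [← sum_inner, sum_sub_mean, inner_zero_left]
  have h₂ : ∑ i, ⟪mean a, b i - mean b⟫ = 0 := by
    rw [← inner_sum, sum_sub_mean, inner_zero_right]
  calc ∑ i, ⟪a i - mean a, b i⟫ = ∑ i, ⟪a i - mean a, b i - mean b⟫ := by
        simp only [inner_sub_right, Finset.sum_sub_distrib, h₁, sub_zero]
    _ = ∑ i, ⟪a i, b i - mean b⟫ := by
        simp only [inner_sub_left, Finset.sum_sub_distrib, h₂, sub_zero]

theorem sum_norm_sub_mean_add_sq (a : ι → E) (v : E) :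
    ∑ i, ‖a i - mean a + v‖ ^ 2 = ∑ i, ‖a i - mean a‖ ^ 2 + Fintype.card ι * ‖v‖ ^ 2 := by
  have hcross : ∑ i, ⟪a i - mean a, v⟫ = 0 := by
    rw [← sum_inner, sum_sub_mean, inner_zero_left]
  simp only [norm_add_sq_real, Finset.sum_add_distrib, ← Finset.mul_sum, hcross,
    Finset.sum_const, Finset.card_univ, nsmul_eq_mul]
  ring

theorem sum_norm_sq_eq_sum_norm_sub_mean_sq_add (a : ι → E) :
    ∑ i, ‖a i‖ ^ 2 = ∑ i, ‖a i - mean a‖ ^ 2 + Fintype.card ι * ‖mean a‖ ^ 2 := by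
  simpa using sum_norm_sub_mean_add_sq a (mean a)

theorem card_mul_norm_mean_sq_le (a : ι → E) :
    Fintype.card ι * ‖mean a‖ ^ 2 ≤ ∑ i, ‖a i‖ ^ 2 := by
  rw [sum_norm_sq_eq_sum_norm_sub_mean_sq_add]
  exact le_add_of_nonneg_left (by positivity)

theorem sum_norm_sub_mean_sq_le {M : ℝ} {a : ι → E} (ha : ∀ i, ‖a i‖ ≤ M) :
    ∑ i, ‖a i - mean a‖ ^ 2 ≤ Fintype.card ι * M ^ 2 :=
  calc ∑ i, ‖a i - mean a‖ ^ 2 ≤ ∑ i, ‖a i‖ ^ 2 := by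
        rw [sum_norm_sq_eq_sum_norm_sub_mean_sq_add a]
        exact le_add_of_nonneg_right (by positivity)
    _ ≤ ∑ _i : ι, M ^ 2 := by gcongr with i; exact ha i
    _ = Fintype.card ι * M ^ 2 := by simp

theorem PiLp.inner_toLp_const (y : PiLp 2 (fun _ : ι => E)) (c : E) :
    ⟪y, WithLp.toLp 2 (fun _ : ι => c)⟫ = Fintype.card ι * ⟪mean y, c⟫ := by
  rw [PiLp.inner_apply, card_mul_inner_mean_left]

theorem card_mul_norm_mean_sq_le_norm_sq (x : PiLp 2 (fun _ : ι => E)) :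
    Fintype.card ι * ‖mean x‖ ^ 2 ≤ ‖x‖ ^ 2 :=
  (PiLp.norm_sq_eq_of_L2 _ x).symm ▸ card_mul_norm_mean_sq_le x

end Mean

theorem PiLp.norm_toLp_const_sq {ι E : Type*} [Fintype ι] [NormedAddCommGroup E] (c : E) :
    ‖WithLp.toLp 2 (fun _ : ι => c)‖ ^ 2 = Fintype.card ι * ‖c‖ ^ 2 := by
  simp [PiLp.norm_sq_eq_of_L2]

section Saddle

variable {ι E : Type*} [Fintype ι] [NormedAddCommGroup E] [InnerProductSpace ℝ E]

/-- The function `Q` of the paper, with `F` and `G` unfolded. -/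
def saddle (f : ι → E → ℝ) (rx ryz : ℝ) (x y z : PiLp 2 (fun _ : ι => E)) : ℝ :=
  (∑ i, f i (x i) + rx / 2 * ‖x‖ ^ 2) - ⟪y, x⟫ - ryz / 2 * ‖y + z‖ ^ 2

variable (f : ι → E → ℝ) (rx : ℝ) {ryz : ℝ}

theorem saddle_toLp_const_le [Nonempty ι] (hryz : 0 < ryz) (c : E)
    {y z : PiLp 2 (fun _ : ι => E)} (hz : ∑ i, z i = 0) :
    saddle f rx ryz (WithLp.toLp 2 fun _ => c) y z
      ≤ ∑ i, f i c + Fintype.card ι * ((rx + ryz⁻¹) / 2 * ‖c‖ ^ 2) := by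
  have hyz : Fintype.card ι * ‖mean y‖ ^ 2 ≤ ‖y + z‖ ^ 2 := by
    simpa [mean_add, mean_eq_zero hz] using card_mul_norm_mean_sq_le_norm_sq (y + z)
  have hyoung := neg_inner_sub_le (mean y) c hryz
  have hn : (0 : ℝ) < Fintype.card ι := by positivity
  rw [saddle, PiLp.norm_toLp_const_sq, PiLp.inner_toLp_const]
  nlinarith [mul_le_mul_of_nonneg_left hyz hryz.le, mul_le_mul_of_nonneg_left hyoung hn.le]

theorem le_saddle_of_subgradient {xa : PiLp 2 (fun _ : ι => E)} (hrx : 0 ≤ rx) {g : ι → E}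
    (hg : ∀ i x, f i (mean xa) + ⟪g i, x - mean xa⟫ ≤ f i x) (v : E) :
    ∑ i, f i (mean xa)
        + Fintype.card ι * (rx / 2 * ‖mean xa‖ ^ 2 - ⟪v, mean xa⟫ - ryz / 2 * ‖v‖ ^ 2)
      ≤ saddle f rx ryz xa (WithLp.toLp 2 fun i => g i - mean g + v)
          (WithLp.toLp 2 fun i => mean g - g i) := by
  have hyz : (WithLp.toLp 2 fun i => g i - mean g + v) + (WithLp.toLp 2 fun i => mean g - g i)
      = (WithLp.toLp 2 fun _ : ι => v : PiLp 2 (fun _ : ι => E)) := by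
    ext1 i
    simp only [PiLp.add_apply]
    abel
  have hinner : ⟪(WithLp.toLp 2 fun i => g i - mean g + v : PiLp 2 (fun _ : ι => E)), xa⟫
      = ∑ i, ⟪g i, xa i - mean xa⟫ + Fintype.card ι * ⟪v, mean xa⟫ := by
    rw [PiLp.inner_apply]
    simp only [inner_add_left, Finset.sum_add_distrib, sum_inner_sub_mean_left]
    rw [← inner_sum, ← card_smul_mean (WithLp.ofLp xa), real_inner_smul_right]
  have hsub : ∑ i, (f i (mean xa) + ⟪g i, xa i - mean xa⟫) ≤ ∑ i, f i (xa i) :=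
    Finset.sum_le_sum fun i _ => hg i (xa i)
  have hxa := mul_le_mul_of_nonneg_left (card_mul_norm_mean_sq_le_norm_sq xa)
    (by positivity : 0 ≤ rx / 2)
  rw [saddle, hyz, PiLp.norm_toLp_const_sq, hinner]
  rw [Finset.sum_add_distrib] at hsub
  nlinarith

theorem sub_le_of_saddle_sub_le [Nonempty ι] [CompleteSpace E] {M : ℝ} (hM : 0 ≤ M)
    (hconv : ∀ i, ConvexOn ℝ Set.univ (f i)) (hlip : ∀ i x x', |f i x - f i x'| ≤ M * ‖x - x'‖)
    (hrx : 0 ≤ rx) (hryz : 0 < ryz) {r : ℝ} (hr : rx + ryz⁻¹ = r) {p : E → ℝ}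
    (hp : ∀ x, p x = (Fintype.card ι : ℝ)⁻¹ * ∑ i, f i x + r / 2 * ‖x‖ ^ 2)
    {α β γ δ : ℝ} (hβ : 0 ≤ β) (hγ : 0 ≤ γ) {xa ya za : PiLp 2 (fun _ : ι => E)}
    (hza : ∑ i, za i = 0)
    (hgap : ∀ x y z : PiLp 2 (fun _ : ι => E), ∑ i, z i = 0 →
      saddle f rx ryz xa y z - saddle f rx ryz x ya za
        ≤ α * ‖x‖ ^ 2 + β * ‖y‖ ^ 2 + γ * ‖z‖ ^ 2 + Fintype.card ι * δ)
    (w c : E) :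
    p (mean xa) - ryz⁻¹ / 2 * ‖mean xa - w‖ ^ 2 - p c
      ≤ α * ‖c‖ ^ 2 + β * (M ^ 2 + ryz⁻¹ ^ 2 * ‖w‖ ^ 2) + γ * M ^ 2 + δ := by
  set n : ℝ := (Fintype.card ι : ℝ)
  have hn : 0 < n := by positivity
  choose g hgM hg using fun i => (hconv i).exists_subgradient_norm_le hM (hlip i) (mean xa)
  set v := -(ryz⁻¹ • w)
  set y : PiLp 2 (fun _ : ι => E) := WithLp.toLp 2 fun i => g i - mean g + v
  set z : PiLp 2 (fun _ : ι => E) := WithLp.toLp 2 fun i => mean g - g i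
  have hlow : ∑ i, f i (mean xa)
      + n * (rx / 2 * ‖mean xa‖ ^ 2 - ⟪v, mean xa⟫ - ryz / 2 * ‖v‖ ^ 2)
      ≤ saddle f rx ryz xa y z := le_saddle_of_subgradient f rx hrx hg v
  have hup := saddle_toLp_const_le f rx (y := ya) hryz c hza
  have hvar := sum_norm_sub_mean_sq_le hgM
  have hy : ‖y‖ ^ 2 ≤ n * (M ^ 2 + ryz⁻¹ ^ 2 * ‖w‖ ^ 2) := by
    rw [PiLp.norm_sq_eq_of_L2, sum_norm_sub_mean_add_sq, norm_neg, norm_smul, mul_pow,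
      Real.norm_of_nonneg (inv_nonneg.2 hryz.le)]
    linarith
  have hz : ‖z‖ ^ 2 ≤ n * M ^ 2 := by
    rw [PiLp.norm_sq_eq_of_L2]
    change ∑ i, ‖mean g - g i‖ ^ 2 ≤ _
    simpa only [norm_sub_rev] using hvar
  have hzsum : ∑ i, z i = 0 := by
    change ∑ i, (mean g - g i) = 0
    rw [← neg_eq_zero, ← Finset.sum_neg_distrib]
    simpa only [neg_sub] using sum_sub_mean g
  have hcomplete : p (mean xa) - ryz⁻¹ / 2 * ‖mean xa - w‖ ^ 2
      = n⁻¹ * ∑ i, f i (mean xa)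
        + (rx / 2 * ‖mean xa‖ ^ 2 - ⟪v, mean xa⟫ - ryz / 2 * ‖v‖ ^ 2) := by
    rw [hp, ← hr, norm_sub_sq_real, norm_neg, norm_smul, inner_neg_left, real_inner_smul_left,
      Real.norm_of_nonneg (inv_nonneg.2 hryz.le), real_inner_comm]
    field_simp
    ring
  rw [← mul_le_mul_iff_right₀ hn]
  calc n * (p (mean xa) - ryz⁻¹ / 2 * ‖mean xa - w‖ ^ 2 - p c)
      = ∑ i, f i (mean xa) + n * (rx / 2 * ‖mean xa‖ ^ 2 - ⟪v, mean xa⟫ - ryz / 2 * ‖v‖ ^ 2)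
        - (∑ i, f i c + n * ((rx + ryz⁻¹) / 2 * ‖c‖ ^ 2)) := by
        rw [hcomplete, hp, hr]
        field_simp
    _ ≤ saddle f rx ryz xa y z - saddle f rx ryz (WithLp.toLp 2 fun _ => c) ya za := by
        linarith
    _ ≤ α * ‖(WithLp.toLp 2 fun _ => c : PiLp 2 (fun _ : ι => E))‖ ^ 2
        + β * ‖y‖ ^ 2 + γ * ‖z‖ ^ 2 + n * δ := hgap _ _ _ hzsum
    _ ≤ n * (α * ‖c‖ ^ 2 + β * (M ^ 2 + ryz⁻¹ ^ 2 * ‖w‖ ^ 2) + γ * M ^ 2 + δ) := by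
        rw [PiLp.norm_toLp_const_sq]
        nlinarith [mul_le_mul_of_nonneg_left hy hβ, mul_le_mul_of_nonneg_left hz hγ]

end Saddle

section Objective

variable {ι E : Type*} [Fintype ι] [NormedAddCommGroup E] {f : ι → E → ℝ} {p : E → ℝ} {r : ℝ}

theorem strongConvexOn_of_eq_mean_add [InnerProductSpace ℝ E]
    (hconv : ∀ i, ConvexOn ℝ Set.univ (f i))
    (hp : ∀ x, p x = (Fintype.card ι : ℝ)⁻¹ * ∑ i, f i x + r / 2 * ‖x‖ ^ 2) :
    StrongConvexOn Set.univ r p := by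
  have hsum : ConvexOn ℝ Set.univ (∑ i, f i) :=
    Finset.sum_induction f (ConvexOn ℝ Set.univ) (fun _ _ => ConvexOn.add)
      (convexOn_const 0 convex_univ) fun i _ => hconv i
  rw [strongConvexOn_iff_convex]
  simpa [hp, Finset.sum_apply] using hsum.smul (by positivity : (0 : ℝ) ≤ (Fintype.card ι : ℝ)⁻¹)

theorem mul_norm_le_of_forall_le [Nonempty ι] {M : ℝ} (hM : 0 ≤ M)
    (hlip : ∀ i x x', |f i x - f i x'| ≤ M * ‖x - x'‖) (hr : 0 < r)
    (hp : ∀ x, p x = (Fintype.card ι : ℝ)⁻¹ * ∑ i, f i x + r / 2 * ‖x‖ ^ 2) {x₀ : E}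
    (hmin : ∀ x, p x₀ ≤ p x) : r * ‖x₀‖ ≤ 2 * M := by
  have hn : (0 : ℝ) < Fintype.card ι := by positivity
  have hsum : ∑ i, f i 0 - ∑ i, f i x₀ ≤ Fintype.card ι * (M * ‖x₀‖) := by
    rw [← Finset.sum_sub_distrib]
    calc ∑ i, (f i 0 - f i x₀) ≤ ∑ _i : ι, M * ‖x₀‖ := by
          gcongr with i
          simpa using (le_abs_self _).trans (hlip i 0 x₀)
      _ = _ := by simp
  have h0 := hmin 0
  rw [hp, hp, norm_zero] at h0
  have : r / 2 * ‖x₀‖ ^ 2 ≤ M * ‖x₀‖ := by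
    have := mul_le_mul_of_nonneg_left hsum (inv_nonneg.2 hn.le)
    rw [inv_mul_cancel_left₀ hn.ne', mul_sub] at this
    nlinarith
  nlinarith [norm_nonneg x₀]

end Objective

theorem le_of_gap_bounds_normalized {r a b c A D W X O : ℝ} (hr : 0 < r) (ha : 0 ≤ a)
    (hba : b ^ 2 ≤ a) (hc : 1 ≤ c) (hA : 0 ≤ A) (hX : r * X ≤ 4 * A) (hW : r / 2 * W ≤ D)
    (hO : O ≤ 2 * (W + X))
    (hB₁ : D - r / 6 * W ≤ 6 * a * (r * X) + 36 * a * A + 90 * a * c * A + 72 * b * A)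
    (hB₂ : D ≤ 2 * a * (r * X) + 4 * a * (r * O) + 36 * a * A + 90 * a * c * A + 72 * b * A) :
    D ≤ 212 * a * c * A + 72 * b * A + 16632 * a ^ 2 * c * A + 864 * a * b * A := by
  have haX := mul_le_mul_of_nonneg_left hX ha
  have haA := mul_le_mul_of_nonneg_left hc (mul_nonneg ha hA)
  have hD₁ : D ≤ 225 * a * c * A + 108 * b * A := by linarith
  have hD₂ : D ≤ 166 * a * c * A + 72 * b * A + 16 * a * D := by
    have := mul_le_mul_of_nonneg_left hO (mul_nonneg ha hr.le)
    have := mul_le_mul_of_nonneg_left hW ha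
    linarith
  -- `864 b ≤ 46 + 13032 b²` has negative discriminant
  have hcoef : 864 * b ≤ 46 * c + 13032 * a * c := by nlinarith [sq_nonneg (114 * b - 4)]
  nlinarith [mul_le_mul_of_nonneg_left hD₁ ha, mul_le_mul_of_nonneg_left hcoef (mul_nonneg ha hA)]

theorem le_of_gap_bounds {r χ M K T P P₀ W X O : ℝ} (hr : 0 < r) (hχ : 1 ≤ χ) (hK : 1 ≤ K)
    (hT : 1 ≤ T) (hX : r ^ 2 * X ≤ 4 * M ^ 2) (hW : r / 2 * W ≤ P - P₀)
    (hO : O ≤ 2 * (W + X))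
    (hB₁ : P - r / 3 / 2 * W - P₀
      ≤ 2 / K ^ 2 * r * X + 2 / K ^ 2 * (18 / r) * (M ^ 2 + (r / 3) ^ 2 * X)
        + 2 / K ^ 2 * (45 * χ ^ 2 / r) * M ^ 2 + 72 * M ^ 2 / (r * K * T))
    (hB₂ : P - P₀
      ≤ 2 / K ^ 2 * r * X + 2 / K ^ 2 * (18 / r) * (M ^ 2 + (r / 3) ^ 2 * O)
        + 2 / K ^ 2 * (45 * χ ^ 2 / r) * M ^ 2 + 72 * M ^ 2 / (r * K * T)) :
    P - P₀ ≤ 212 * χ ^ 2 * M ^ 2 / (r * K ^ 2) + 72 * M ^ 2 / (r * K * T)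
        + (12 / K ^ 2) * (1386 * χ ^ 2 * M ^ 2 / (r * K ^ 2) + 72 * M ^ 2 / (r * K * T)) := by
  have hK₀ : 0 < K := by linarith
  have hT₀ : 0 < T := by linarith
  have hba : (1 / (K * T)) ^ 2 ≤ 1 / K ^ 2 := by
    rw [div_pow, one_pow, mul_pow]
    gcongr
    exact le_mul_of_one_le_right (by positivity) (one_le_pow₀ hT)
  have hrX : r * X ≤ 4 * (M ^ 2 / r) := by rw [mul_div_assoc', le_div_iff₀ hr]; linarith
  have hB₁' : P - P₀ - r / 6 * W
      ≤ 6 * (1 / K ^ 2) * (r * X) + 36 * (1 / K ^ 2) * (M ^ 2 / r)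
        + 90 * (1 / K ^ 2) * χ ^ 2 * (M ^ 2 / r) + 72 * (1 / (K * T)) * (M ^ 2 / r) := by
    convert hB₁ using 1 <;> field_simp <;> ring
  have hB₂' : P - P₀
      ≤ 2 * (1 / K ^ 2) * (r * X) + 4 * (1 / K ^ 2) * (r * O) + 36 * (1 / K ^ 2) * (M ^ 2 / r)
        + 90 * (1 / K ^ 2) * χ ^ 2 * (M ^ 2 / r) + 72 * (1 / (K * T)) * (M ^ 2 / r) := by
    convert hB₂ using 1
    field_simp
    ring
  convert le_of_gap_bounds_normalized hr (by positivity) hba (one_le_pow₀ hχ) (by positivity)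
    hrX hW hO hB₁' hB₂' using 1
  field_simp
  ring

theorem stmt18_general (d n : ℕ) (hn : 1 ≤ n) (M : ℝ) (hM : 0 ≤ M)
    (f : Fin n → EuclideanSpace ℝ (Fin d) → ℝ)
    (hconv : ∀ i, ConvexOn ℝ Set.univ (f i))
    (hlip : ∀ i x x', |f i x - f i x'| ≤ M * ‖x - x'‖)
    (r χ : ℝ) (hr : 0 < r) (hχ : 1 ≤ χ)
    (K T : ℕ) (hK : 1 ≤ K) (hT : 1 ≤ T)
    (rx ryz : ℝ) (hrx : rx = 2 * r / 3) (hryz : ryz = 3 / r)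
    (p : EuclideanSpace ℝ (Fin d) → ℝ)
    (hp : ∀ x, p x = (n : ℝ)⁻¹ * (∑ i, f i x) + (r / 2) * ‖x‖ ^ 2)
    (F : Vec d n → ℝ) (hF : ∀ x, F x = (∑ i, f i (x i)) + (rx / 2) * ‖x‖ ^ 2)
    (G : Vec d n → Vec d n → ℝ) (hG : ∀ y z, G y z = (ryz / 2) * ‖y + z‖ ^ 2)
    (Q : Vec d n → Vec d n → Vec d n → ℝ)
    (hQ : ∀ x y z, Q x y z = F x - ⟪y, x⟫ - G y z)
    (xstar : EuclideanSpace ℝ (Fin d))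
    (hmin : ∀ x, p xstar ≤ p x)
    (xa ya za : Vec d n) (hza : (∑ i, za i) = 0)
    (hkey : ∀ x y z : Vec d n, (∑ i, z i) = 0 →
      Q xa y z - Q x ya za ≤
        (2 / (K : ℝ) ^ 2) * (r * ‖x‖ ^ 2 + (18 / r) * ‖y‖ ^ 2 + (45 * χ ^ 2 / r) * ‖z‖ ^ 2)
          + 72 * n * M ^ 2 / (r * K * T)) :
    p ((n : ℝ)⁻¹ • ∑ i, xa i) - p xstar ≤
      212 * χ ^ 2 * M ^ 2 / (r * K ^ 2) + 72 * M ^ 2 / (r * K * T)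
        + (12 / (K : ℝ) ^ 2) *
          (1386 * χ ^ 2 * M ^ 2 / (r * K ^ 2) + 72 * M ^ 2 / (r * K * T)) := by
  subst hrx hryz
  have : Nonempty (Fin n) := ⟨⟨0, hn⟩⟩
  have hp' : ∀ x, p x = (Fintype.card (Fin n) : ℝ)⁻¹ * ∑ i, f i x + r / 2 * ‖x‖ ^ 2 := by
    simpa using hp
  have hgap : ∀ x y z : Vec d n, ∑ i, z i = 0 →
      saddle f (2 * r / 3) (3 / r) xa y z - saddle f (2 * r / 3) (3 / r) x ya za
        ≤ 2 / (K : ℝ) ^ 2 * r * ‖x‖ ^ 2 + 2 / (K : ℝ) ^ 2 * (18 / r) * ‖y‖ ^ 2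
          + 2 / (K : ℝ) ^ 2 * (45 * χ ^ 2 / r) * ‖z‖ ^ 2
          + Fintype.card (Fin n) * (72 * M ^ 2 / (r * K * T)) := fun x y z hz =>
    calc _ = Q xa y z - Q x ya za := by simp only [hQ, hF, hG, saddle]
      _ ≤ _ := hkey x y z hz
      _ = _ := by rw [Fintype.card_fin]; ring
  have hbound := sub_le_of_saddle_sub_le f (2 * r / 3) hM hconv hlip (by positivity)
    (by positivity) (by rw [inv_div]; ring) hp' (by positivity) (by positivity) hza hgap
  have hW := (strongConvexOn_of_eq_mean_add hconv hp').mul_sq_norm_sub_le_sub hmin (mean xa)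
  have hX := mul_norm_le_of_forall_le hM hlip hr hp' hmin
  have hO : ‖mean xa‖ ^ 2 ≤ 2 * (‖mean xa - xstar‖ ^ 2 + ‖xstar‖ ^ 2) :=
    (pow_le_pow_left₀ (norm_nonneg _) (norm_le_norm_sub_add _ _) 2).trans add_sq_le
  rw [show (n : ℝ)⁻¹ • ∑ i, xa i = mean xa by simp [mean]]
  refine le_of_gap_bounds hr hχ (by exact_mod_cast hK) (by exact_mod_cast hT)
    (by nlinarith [pow_le_pow_left₀ (by positivity) hX 2]) hW hO ?_ ?_
  · simpa only [inv_div] using hbound xstar xstar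
  · simpa only [sub_self, norm_zero, ne_eq, OfNat.ofNat_ne_zero, not_false_eq_true, zero_pow,
      mul_zero, sub_zero, inv_div] using hbound (mean xa) xstar

theorem stmt18 (d n : ℕ) (hd : 1 ≤ d) (hn : 1 ≤ n) (M : ℝ) (hM : 0 ≤ M)
    (f : Fin n → EuclideanSpace ℝ (Fin d) → ℝ)
    (hconv : ∀ i, ConvexOn ℝ Set.univ (f i))
    (hlip : ∀ i x x', |f i x - f i x'| ≤ M * ‖x - x'‖)
    (r χ : ℝ) (hr : 0 < r) (hχ : 1 ≤ χ)
    (K T : ℕ) (hK : 1 ≤ K) (hT : 1 ≤ T)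
    (rx ryz : ℝ) (hrx : rx = 2 * r / 3) (hryz : ryz = 3 / r)
    (p : EuclideanSpace ℝ (Fin d) → ℝ)
    (hp : ∀ x, p x = (n : ℝ)⁻¹ * (∑ i, f i x) + (r / 2) * ‖x‖ ^ 2)
    (F : Vec d n → ℝ) (hF : ∀ x, F x = (∑ i, f i (x i)) + (rx / 2) * ‖x‖ ^ 2)
    (G : Vec d n → Vec d n → ℝ) (hG : ∀ y z, G y z = (ryz / 2) * ‖y + z‖ ^ 2)
    (Q : Vec d n → Vec d n → Vec d n → ℝ)
    (hQ : ∀ x y z, Q x y z = F x - ⟪y, x⟫ - G y z)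
    (xstar : EuclideanSpace ℝ (Fin d))
    (hmin : ∀ x, p xstar ≤ p x)
    (huniq : ∀ x, (∀ x', p x ≤ p x') → x = xstar)
    (xa ya za : Vec d n) (hza : (∑ i, za i) = 0)
    (hkey : ∀ x y z : Vec d n, (∑ i, z i) = 0 →
      Q xa y z - Q x ya za ≤
        (2 / (K : ℝ) ^ 2) * (r * ‖x‖ ^ 2 + (18 / r) * ‖y‖ ^ 2 + (45 * χ ^ 2 / r) * ‖z‖ ^ 2)
          + 72 * n * M ^ 2 / (r * K * T)) :
    p ((n : ℝ)⁻¹ • ∑ i, xa i) - p xstar ≤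
      212 * χ ^ 2 * M ^ 2 / (r * K ^ 2) + 72 * M ^ 2 / (r * K * T)
        + (12 / (K : ℝ) ^ 2) *
          (1386 * χ ^ 2 * M ^ 2 / (r * K ^ 2) + 72 * M ^ 2 / (r * K * T)) :=
  stmt18_general d n hn M hM f hconv hlip r χ hr hχ K T hK hT rx ryz hrx hryz p hp F hF G hG Q hQ
    xstar hmin xa ya za hza hkey
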